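/- arXiv:2111.08467 — 2 statements merged into one kernel-verified Lean document; each statement's English description precedes it below -/
import Mathlib

section
/- Let π be a group, Φ: π → π^n ⋊ Σ_n a homomorphism, and let P = (δ_1,…,δ_n; ε) ∈ π^n ⋊ Σ_n. Let τ_P Φ denote the homomorphism γ ↦ P·Φ(γ)·P⁻¹. Then the map μ_P: π × {1,…,n} → π × {1,…,n} defined by μ_P(α,k) = (δ_k⁻¹ α, ε⁻¹(k)) descends to a well-defined bijection from the Reidemeister classes of τ_P Φ to the Reidemeister classes of Φ. -/
/-- The action of the symmetric group `Σ_n` on `π^n` by permuting coordinates: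
`σ · (β_1,…,β_n) = (β_{σ⁻¹(1)},…,β_{σ⁻¹(n)})`. -/
def permAut (π : Type*) [Group π] (n : ℕ) : Equiv.Perm (Fin n) →* MulAut (Fin n → π) where
  toFun σ :=
    { toFun := fun β => β ∘ σ.symm
      invFun := fun β => β ∘ σ
      left_inv := fun β => by funext k; simp
      right_inv := fun β => by funext k; simp
      map_mul' := fun β γ => rfl }
  map_one' := by ext β k; rfl
  map_mul' := fun σ ρ => by ext β k; show β ((σ * ρ).symm k) = β (ρ.symm (σ.symm k)); rw [Equiv.Perm.mul_def, Equiv.symm_trans_apply]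


/-- The Reidemeister (twisted conjugacy) relation on `π × {1,…,n}` associated to
a homomorphism `Ψ : π → π^n ⋊ Σ_n`. -/
def reidRel {π : Type*} [Group π] {n : ℕ}
    (Ψ : π →* (Fin n → π) ⋊[permAut π n] Equiv.Perm (Fin n)) :
    π × Fin n → π × Fin n → Prop :=
  fun p q => ∃ γ : π, (Ψ γ).right p.2 = q.2 ∧ p.1 = ((Ψ γ).left q.2)⁻¹ * q.1 * γ

/-- The set of Reidemeister classes of `Ψ`. -/
def ReidClasses {π : Type*} [Group π] {n : ℕ}
    (Ψ : π →* (Fin n → π) ⋊[permAut π n] Equiv.Perm (Fin n)) : Type _ :=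
  Quot (reidRel Ψ)

/-- The conjugated homomorphism `τ_P Φ : γ ↦ P · Φ(γ) · P⁻¹`. -/
def tau {π : Type*} [Group π] {n : ℕ}
    (P : (Fin n → π) ⋊[permAut π n] Equiv.Perm (Fin n))
    (Φ : π →* (Fin n → π) ⋊[permAut π n] Equiv.Perm (Fin n)) :
    π →* (Fin n → π) ⋊[permAut π n] Equiv.Perm (Fin n) :=
  ((MulAut.conj P).toMonoidHom).comp Φ

/-!
Conjugation by `P` only relabels the data of the Reidemeister relation: the permutation
part of `τ_P Φ(γ)` is `ε ρ_γ ε⁻¹`, and its coordinates are those of `Φ(γ)` multiplied by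
`δ` on both sides. Hence `μ_P` maps `τ_P Φ`-related pairs to `Φ`-related pairs, with the
same witness `γ`. Since `τ_{P⁻¹} τ_P Φ = Φ` and `μ_{P⁻¹}` inverts `μ_P`, the converse is the
same statement for `P⁻¹`, so `μ_P` is a bijection identifying the two relations.
-/

section

variable {π : Type*} [Group π] {n : ℕ}

local notation "𝔖" => (Fin n → π) ⋊[permAut π n] Equiv.Perm (Fin n)

@[simp]
lemma permAut_apply (σ : Equiv.Perm (Fin n)) (β : Fin n → π) (k : Fin n) :
    permAut π n σ β k = β (σ⁻¹ k) :=
  rfl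

@[simp]
lemma permAut_symm_apply (σ : Equiv.Perm (Fin n)) (β : Fin n → π) (k : Fin n) :
    (permAut π n σ).symm β k = β (σ k) :=
  rfl

lemma tau_mul (P Q : 𝔖) (Φ : π →* 𝔖) : tau (P * Q) Φ = tau P (tau Q Φ) := by
  ext1 γ
  simp [tau, MulAut.conj_apply, mul_assoc]

lemma tau_one (Φ : π →* 𝔖) : tau 1 Φ = Φ := by
  ext1 γ
  simp [tau]

lemma tau_inv_tau (P : 𝔖) (Φ : π →* 𝔖) : tau P⁻¹ (tau P Φ) = Φ := by
  rw [← tau_mul, inv_mul_cancel, tau_one]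

lemma tau_apply_right (P : 𝔖) (Φ : π →* 𝔖) (γ : π) :
    (tau P Φ γ).right = P.right * (Φ γ).right * P.right⁻¹ := by
  simp [tau]

lemma tau_apply_left (P : 𝔖) (Φ : π →* 𝔖) (γ : π) (j : Fin n) :
    (tau P Φ γ).left j
      = P.left j * (Φ γ).left (P.right⁻¹ j)
        * (P.left (P.right ((Φ γ).right⁻¹ (P.right⁻¹ j))))⁻¹ := by
  show (P * Φ γ * P⁻¹).left j = _
  simp [mul_assoc]

/-- The map `μ_P (α, k) = (δ_k⁻¹ α, ε⁻¹ k)` for `P = (δ; ε)`. -/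
def reidShift (P : 𝔖) (p : π × Fin n) : π × Fin n :=
  ((P.left p.2)⁻¹ * p.1, P.right⁻¹ p.2)

lemma reidShift_inv_reidShift (P : 𝔖) (p : π × Fin n) :
    reidShift P⁻¹ (reidShift P p) = p := by
  simp [reidShift]

def reidShiftEquiv (P : 𝔖) : π × Fin n ≃ π × Fin n where
  toFun := reidShift P
  invFun := reidShift P⁻¹
  left_inv := reidShift_inv_reidShift P
  right_inv p := by simpa using reidShift_inv_reidShift P⁻¹ p

lemma reidRel_reidShift_of_reidRel_tau (P : 𝔖) (Φ : π →* 𝔖) {p q : π × Fin n}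
    (h : reidRel (tau P Φ) p q) : reidRel Φ (reidShift P p) (reidShift P q) := by
  obtain ⟨γ, hperm, hcoord⟩ := h
  rw [tau_apply_right] at hperm
  have hperm' : (Φ γ).right (P.right⁻¹ p.2) = P.right⁻¹ q.2 := by
    simpa using congrArg (⇑P.right⁻¹) hperm
  have hback : P.right ((Φ γ).right⁻¹ (P.right⁻¹ q.2)) = p.2 := by
    simp [← hperm']
  refine ⟨γ, hperm', ?_⟩
  rw [tau_apply_left, hback] at hcoord
  simp only [reidShift, hcoord]
  group

lemma reidRel_tau_iff (P : 𝔖) (Φ : π →* 𝔖) (p q : π × Fin n) :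
    reidRel (tau P Φ) p q ↔ reidRel Φ (reidShift P p) (reidShift P q) := by
  refine ⟨reidRel_reidShift_of_reidRel_tau P Φ, fun h => ?_⟩
  have h' := reidRel_reidShift_of_reidRel_tau P⁻¹ (tau P Φ) (by rwa [tau_inv_tau])
  rwa [reidShift_inv_reidShift, reidShift_inv_reidShift] at h'

end

theorem stmt5 (π : Type*) [Group π] (n : ℕ)
    (Φ : π →* (Fin n → π) ⋊[permAut π n] Equiv.Perm (Fin n))
    (P : (Fin n → π) ⋊[permAut π n] Equiv.Perm (Fin n)) :
    ∃ e : ReidClasses (tau P Φ) ≃ ReidClasses Φ,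
      ∀ (α : π) (k : Fin n),
        e (Quot.mk _ (α, k)) = Quot.mk _ ((P.left k)⁻¹ * α, P.right⁻¹ k) :=
  ⟨Quot.congr (reidShiftEquiv P) (reidRel_tau_iff P Φ), fun _ _ => rfl⟩
end

section
/- Let π act freely on X̃ and let f̃ = (f̃_1,…,f̃_n): X̃ → F_n(X̃,π) be Φ-equivariant, where F_n(X̃,π) consists of tuples whose coordinates lie in pairwise distinct π-orbits and Φ has coordinates (φ_1,…,φ_n;σ). If for some x̃ ∈ X̃, α,β,γ ∈ π and indices k,j one has α⁻¹ f̃_k(x̃) = x̃ and β⁻¹ f̃_j(γ x̃) = γ x̃, then k = σ_γ⁻¹(j) and α = φ_j(γ)⁻¹ β γ; i.e., the pairs (α,k) and (β,j) are Reidemeister equivalent for Φ. -/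
/-- The action formula of `π^n ⋊ Σ_n` on tuples. -/
def sdpAct {π : Type*} [Group π] {n : ℕ} {X : Type*} [MulAction π X]
    (A : (Fin n → π) ⋊[permAut π n] Equiv.Perm (Fin n)) (x : Fin n → X) :
    Fin n → X :=
  fun k => A.left k • x (A.right⁻¹ k)

theorem eq_of_smul_eq_smul_of_free {π X : Type*} [Group π] [MulAction π X]
    (hfree : ∀ (g : π) (x : X), g • x = x → g = 1) {a b : π} {x : X} (h : a • x = b • x) :
    a = b :=
  (inv_mul_eq_one.mp (hfree (b⁻¹ * a) x (by rw [mul_smul, h, inv_smul_smul]))).symm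

theorem index_eq_of_mem_same_orbit {π X ι : Type*} [Group π] [MulAction π X] {y : ι → X}
    (hconfig : ∀ k j : ι, k ≠ j → ∀ g : π, g • y k ≠ y j) {a b : π} {x : X} {k j : ι}
    (hk : y k = a • x) (hj : y j = b • x) : k = j := by
  by_contra hne
  exact hconfig k j hne (b * a⁻¹) (by rw [hk, hj, smul_smul, inv_mul_cancel_right])

/-- If `π` acts freely on `X̃`, `f̃` is `Φ`-equivariant with values in the orbit
configuration space (coordinates in pairwise distinct `π`-orbits), and
`α⁻¹ f̃_k(x̃) = x̃` and `β⁻¹ f̃_j(γ x̃) = γ x̃`, then `k = σ_γ⁻¹(j)` and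
`α = φ_j(γ)⁻¹ β γ`, i.e. `(α,k)` and `(β,j)` are Reidemeister equivalent. -/
theorem stmt17 (π : Type*) [Group π] (n : ℕ) (X : Type*) [MulAction π X]
    (hfree : ∀ (g : π) (x : X), g • x = x → g = 1)
    (Φ : π →* (Fin n → π) ⋊[permAut π n] Equiv.Perm (Fin n))
    (f : X → Fin n → X)
    (hconfig : ∀ (x : X) (k j : Fin n), k ≠ j → ∀ g : π, g • f x k ≠ f x j)
    (hequiv : ∀ (γ : π) (x : X), f (γ • x) = sdpAct (Φ γ) (f x))
    (x : X) (α β γ : π) (k j : Fin n)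
    (hα : α⁻¹ • f x k = x) (hβ : β⁻¹ • f (γ • x) j = γ • x) :
    k = (Φ γ).right⁻¹ j ∧ α = ((Φ γ).left j)⁻¹ * β * γ := by
  set m := (Φ γ).right⁻¹ j
  set φ := (Φ γ).left j
  have hk : f x k = α • x := inv_smul_eq_iff.mp hα
  have hm : f x m = (φ⁻¹ * β * γ) • x := by
    have hj : φ • f x m = β • γ • x := by
      rw [← inv_smul_eq_iff.mp hβ, hequiv]
      rfl
    rw [mul_smul, mul_smul, ← hj, inv_smul_smul]
  have hkm : k = m := index_eq_of_mem_same_orbit (hconfig x) hk hm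
  exact ⟨hkm, eq_of_smul_eq_smul_of_free hfree (hk.symm.trans (hkm ▸ hm))⟩
end
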